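/- Let X ⊆ ℓ^∞ contain the zero sequence and satisfy span(𝟏) + X ⊆ X. Then the set U(X) of X-universal functions is nowhere dense in (C(ℝ), d_∞); in particular it is of first Baire category. -/

import Mathlib

open Filter Set

/-- The metric d_∞(f,g) = min(‖f−g‖_∞, 1) on functions ℝ → ℝ (value 1 if sup is infinite). -/
noncomputable def dinf (f g : ℝ → ℝ) : ℝ :=
  (min (⨆ x : ℝ, ENNReal.ofReal |f x - g x|) 1).toReal

/-- x is a bounded sequence, i.e. x ∈ ℓ^∞. -/
def Bdd (x : ℕ → ℝ) : Prop := ∃ C : ℝ, ∀ n : ℕ, |x n| ≤ C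

/-- sup_n |f(t+n) − x_n|, computed in ℝ≥0∞. -/
noncomputable def gapSup (f : ℝ → ℝ) (x : ℕ → ℝ) (t : ℝ) : ENNReal :=
  ⨆ n : ℕ, ENNReal.ofReal |f (t + n) - x n|

/-- f ∈ U(X): f is an X-universal interpolating function. -/
def memU (X : Set (ℕ → ℝ)) (f : ℝ → ℝ) : Prop :=
  Continuous f ∧ ∀ x ∈ X, ∃ t : ℝ, ∀ n : ℕ, f (t + n) = x n

/-- f ∈ U_N(X): f is nearly X-universal. -/
def memUN (X : Set (ℕ → ℝ)) (f : ℝ → ℝ) : Prop :=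
  Continuous f ∧ ∀ x ∈ X, (⨅ t : ℝ, gapSup f x t) = 0

/-- f is piecewise affine with locally finitely many breakpoints. -/
def PWAffine (f : ℝ → ℝ) : Prop :=
  ∃ z : ℤ → ℝ, StrictMono z ∧ Tendsto z atTop atTop ∧ Tendsto z atBot atBot ∧
    ∀ n : ℤ, ∃ a b : ℝ, ∀ x ∈ Set.Icc (z n) (z (n + 1)), f x = a * x + b

/-- span(𝟏): the set of constant sequences. -/
def spanOne : Set (ℕ → ℝ) := {x | ∃ c : ℝ, x = fun _ => c}

/-- dist(x, span(𝟏)) computed in ℝ≥0∞. -/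
noncomputable def distSpanOne (x : ℕ → ℝ) : ENNReal :=
  ⨅ c : ℝ, ⨆ n : ℕ, ENNReal.ofReal |x n - c|

/-
Perturb `f` by at most `2γ` to some `g` such that every progression `t + ℕ` contains a point
where `|g| ≥ γ`; then no `h` within `γ` of `g` vanishes along a progression, so none
interpolates the zero sequence.

On each block `[5i, 5i + 5]` the perturbation is a comb of `N` trapezoidal teeth of height
`±2γ`, with the sign of `f` at the tooth's centre; tooth `j` has its plateau over points whose
fractional part lies in `[j / N, (j + 1) / N]`. With `N` so large that `f` varies by less than
`γ` across a tooth, `|f + comb| ≥ γ` on every plateau.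
-/

open Function

noncomputable def trapezoid (r x : ℝ) : ℝ := max 0 (min 1 (2 - 2 * r * |x|))

@[fun_prop]
lemma continuous_trapezoid (r : ℝ) : Continuous (trapezoid r) := by
  unfold trapezoid; fun_prop

lemma abs_trapezoid_le_one (r x : ℝ) : |trapezoid r x| ≤ 1 := by
  unfold trapezoid
  rw [abs_of_nonneg (le_max_left _ _)]
  exact max_le zero_le_one (min_le_left _ _)

lemma trapezoid_eq_one {r x : ℝ} (h : 2 * r * |x| ≤ 1) : trapezoid r x = 1 := by
  unfold trapezoid
  rw [min_eq_left (by linarith), max_eq_right zero_le_one]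

lemma trapezoid_eq_zero {r x : ℝ} (h : 1 ≤ r * |x|) : trapezoid r x = 0 := by
  unfold trapezoid
  exact max_eq_left ((min_le_right _ _).trans (by linarith))

lemma mul_abs_lt_one_of_trapezoid_ne_zero {r x : ℝ} (h : trapezoid r x ≠ 0) : r * |x| < 1 :=
  lt_of_not_ge (mt trapezoid_eq_zero h)

lemma trapezoid_eq_zero_of_ne_zero {r c c' x : ℝ} (hsep : 2 ≤ r * |c - c'|)
    (h : trapezoid r (x - c) ≠ 0) : trapezoid r (x - c') = 0 := by
  have hx := mul_abs_lt_one_of_trapezoid_ne_zero h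
  have htri : |c - c'| ≤ |x - c| + |x - c'| := by
    simpa only [abs_sub_comm x c] using abs_sub_le c x c'
  have hr : 0 ≤ r := by
    by_contra! hr
    nlinarith [abs_nonneg (c - c')]
  apply trapezoid_eq_zero
  nlinarith

section Comb

variable (f : ℝ → ℝ) (γ a : ℝ) (N : ℕ)

/-- Neighbouring teeth would overlap, so even and odd teeth go in the separate lanes
`[a + 1, a + 2]` and `[a + 3, a + 4]`. -/
def laneOffset (j : ℕ) : ℕ := 1 + 2 * (j % 2)

noncomputable def toothCenter (j : ℕ) : ℝ := a + laneOffset j + (j + 1 / 2) / N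

noncomputable def toothHeight (j : ℕ) : ℝ :=
  if 0 ≤ f (toothCenter a N j) then 2 * γ else -(2 * γ)

noncomputable def comb (x : ℝ) : ℝ :=
  ∑ j ∈ Finset.range N, toothHeight f γ a N j * trapezoid N (x - toothCenter a N j)

variable {f γ a N}

lemma laneOffset_bounds (j : ℕ) : (1 : ℝ) ≤ laneOffset j ∧ (laneOffset j : ℝ) ≤ 3 := by
  unfold laneOffset; constructor <;> norm_cast <;> omega

lemma toothCenter_mem_Icc {j : ℕ} (hj : j < N) : toothCenter a N j ∈ Icc (a + 1) (a + 4) := by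
  have hN : (0 : ℝ) < N := by exact_mod_cast (Nat.zero_le j).trans_lt hj
  have hjN : (j : ℝ) + 1 ≤ N := by exact_mod_cast hj
  have hlane := laneOffset_bounds j
  have hfrac : ((j : ℝ) + 1 / 2) / N ∈ Icc (0 : ℝ) 1 :=
    ⟨by positivity, (div_le_one hN).2 (by linarith)⟩
  unfold toothCenter
  constructor <;> linarith [hlane.1, hlane.2, hfrac.1, hfrac.2]

lemma two_le_mul_abs_toothCenter_sub {j k : ℕ} (hj : j < N) (hk : k < N) (hjk : j ≠ k) :
    2 ≤ (N : ℝ) * |toothCenter a N j - toothCenter a N k| := by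
  have hN : (0 : ℝ) < N := by exact_mod_cast (Nat.zero_le j).trans_lt hj
  have hdiff : (N : ℝ) * (toothCenter a N j - toothCenter a N k) =
      ((N * ((laneOffset j : ℤ) - laneOffset k) + (j - k) : ℤ) : ℝ) := by
    unfold toothCenter; push_cast; field_simp; ring
  have hsep : (2 : ℤ) ≤ |N * ((laneOffset j : ℤ) - laneOffset k) + (j - k)| := by
    unfold laneOffset
    rw [le_abs]
    rcases Nat.mod_two_eq_zero_or_one j with hj2 | hj2 <;>
      rcases Nat.mod_two_eq_zero_or_one k with hk2 | hk2 <;>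
      simp only [hj2, hk2] <;> push_cast <;> omega
  rw [← abs_of_pos hN, ← abs_mul, hdiff]
  exact_mod_cast hsep

lemma comb_eq_of_trapezoid_ne_zero {j : ℕ} {x : ℝ} (hj : j < N)
    (h : trapezoid N (x - toothCenter a N j) ≠ 0) :
    comb f γ a N x = toothHeight f γ a N j * trapezoid N (x - toothCenter a N j) := by
  refine Finset.sum_eq_single_of_mem j (Finset.mem_range.2 hj) fun k hk hkj => ?_
  rw [trapezoid_eq_zero_of_ne_zero
    (two_le_mul_abs_toothCenter_sub hj (Finset.mem_range.1 hk) hkj.symm) h, mul_zero]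

lemma abs_toothHeight (hγ : 0 ≤ γ) (j : ℕ) : |toothHeight f γ a N j| = 2 * γ := by
  unfold toothHeight
  split_ifs <;> simp [abs_of_nonneg hγ]

lemma abs_comb_le (hγ : 0 ≤ γ) (x : ℝ) : |comb f γ a N x| ≤ 2 * γ := by
  by_cases h : ∃ j < N, trapezoid N (x - toothCenter a N j) ≠ 0
  · obtain ⟨j, hj, hne⟩ := h
    rw [comb_eq_of_trapezoid_ne_zero hj hne, abs_mul, abs_toothHeight hγ]
    exact mul_le_of_le_one_right (by positivity) (abs_trapezoid_le_one _ _)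
  · push Not at h
    rw [comb, Finset.sum_eq_zero fun j hj => by rw [h j (Finset.mem_range.1 hj), mul_zero]]
    simpa using hγ

lemma comb_eq_toothHeight {j : ℕ} {x : ℝ} (hj : j < N)
    (hx : 2 * N * |x - toothCenter a N j| ≤ 1) : comb f γ a N x = toothHeight f γ a N j := by
  have hone := trapezoid_eq_one hx
  rw [comb_eq_of_trapezoid_ne_zero hj (by simp [hone]), hone, mul_one]

lemma support_comb_subset : support (comb f γ a N) ⊆ Ioo a (a + 5) := by
  intro x hx
  obtain ⟨j, hj, hne⟩ := Finset.exists_ne_zero_of_sum_ne_zero hx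
  have hj := Finset.mem_range.1 hj
  have hN : (1 : ℝ) ≤ N := by exact_mod_cast (Nat.zero_le j).trans_lt hj
  have hclose := mul_abs_lt_one_of_trapezoid_ne_zero (right_ne_zero_of_mul hne)
  have hc := toothCenter_mem_Icc (a := a) hj
  have hlt : |x - toothCenter a N j| < 1 := by nlinarith [abs_nonneg (x - toothCenter a N j)]
  obtain ⟨hlo, hhi⟩ := abs_lt.1 hlt
  exact ⟨by linarith [hc.1], by linarith [hc.2]⟩

lemma continuous_comb : Continuous (comb f γ a N) := by
  unfold comb; fun_prop

lemma floor_mul_lt_of_mem_Ico {α : ℝ} (hα : α ∈ Ico (0 : ℝ) 1) (hN : 0 < N) : ⌊α * N⌋₊ < N := by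
  have hN' : (0 : ℝ) < N := by exact_mod_cast hN
  exact (Nat.floor_lt (by nlinarith [hα.1])).2 (by nlinarith [hα.2])

lemma two_mul_abs_sub_toothCenter_le {α : ℝ} (hα : 0 ≤ α) (hN : 0 < N) :
    2 * N * |a + laneOffset ⌊α * N⌋₊ + α - toothCenter a N ⌊α * N⌋₊| ≤ 1 := by
  set j := ⌊α * N⌋₊
  have hN' : (0 : ℝ) < N := by exact_mod_cast hN
  have hjle : (j : ℝ) ≤ α * N := Nat.floor_le (by positivity)
  have hjlt : α * N < j + 1 := Nat.lt_floor_add_one _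
  have hdiff : 2 * N * (a + laneOffset j + α - toothCenter a N j) = 2 * (α * N - (j + 1 / 2)) := by
    unfold toothCenter; field_simp; ring
  rw [← abs_of_pos (by positivity : (0 : ℝ) < 2 * N), ← abs_mul, hdiff, abs_le]
  constructor <;> linarith

lemma le_abs_add_toothHeight {x : ℝ} {j : ℕ} (h : |f x - f (toothCenter a N j)| < γ) :
    γ ≤ |f x + toothHeight f γ a N j| := by
  unfold toothHeight
  rw [abs_lt] at h
  split_ifs <;> rw [le_abs]
  · left; linarith
  · right; linarith

lemma exists_comb_escape (hf : ContinuousOn f (Icc (a + 1) (a + 4))) (hγ : 0 < γ) :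
    ∃ N : ℕ, ∀ α ∈ Ico (0 : ℝ) 1, ∃ m : ℕ, a + m + α ∈ support (comb f γ a N) ∧
      γ ≤ |f (a + m + α) + comb f γ a N (a + m + α)| := by
  obtain ⟨δ, hδ, hfδ⟩ :=
    Metric.uniformContinuousOn_iff.1 (isCompact_Icc.uniformContinuousOn_of_continuous hf) γ hγ
  obtain ⟨n, hn⟩ := exists_nat_one_div_lt hδ
  refine ⟨n + 1, fun α hα => ⟨laneOffset ⌊α * (n + 1 : ℕ)⌋₊, ?_⟩⟩
  have hj := floor_mul_lt_of_mem_Ico hα n.succ_pos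
  have hclose := two_mul_abs_sub_toothCenter_le (a := a) hα.1 n.succ_pos
  set j := ⌊α * (n + 1 : ℕ)⌋₊
  set x := a + laneOffset j + α
  have hplateau : comb f γ a (n + 1) x = toothHeight f γ a (n + 1) j :=
    comb_eq_toothHeight hj hclose
  have hx : x ∈ Icc (a + 1) (a + 4) := by
    have := laneOffset_bounds j
    constructor <;> linarith [hα.1, hα.2]
  have hdist : dist x (toothCenter a (n + 1) j) < δ := by
    rw [Real.dist_eq]
    push_cast at hclose
    have : |x - toothCenter a (n + 1) j| ≤ 1 / (n + 1) := by
      rw [le_div_iff₀ (by positivity)]; nlinarith [abs_nonneg (x - toothCenter a (n + 1) j)]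
    linarith
  have hf := hfδ x hx _ (toothCenter_mem_Icc hj) hdist
  rw [Real.dist_eq] at hf
  refine ⟨?_, ?_⟩
  · rw [mem_support, hplateau, ← abs_ne_zero, abs_toothHeight hγ.le]
    positivity
  · rw [hplateau]
    exact le_abs_add_toothHeight hf

end Comb

section DisjointSupports

variable {ι α : Type*} {B : ι → α → ℝ}

lemma finsum_apply_eq_of_mem_support (hB : Pairwise (Disjoint on fun i => support (B i)))
    {i : ι} {x : α} (hx : x ∈ support (B i)) : ∑ᶠ k, B k x = B i x :=
  finsum_eq_single _ i fun _ hki => notMem_support.1 fun hk => (hB hki).ne_of_mem hk hx rfl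

lemma abs_finsum_apply_le (hB : Pairwise (Disjoint on fun i => support (B i))) {C : ℝ}
    (hC : 0 ≤ C) (hBC : ∀ i x, |B i x| ≤ C) (x : α) : |∑ᶠ k, B k x| ≤ C := by
  by_cases h : ∃ i, x ∈ support (B i)
  · obtain ⟨i, hi⟩ := h
    rw [finsum_apply_eq_of_mem_support hB hi]
    exact hBC i x
  · push Not at h
    simp only [notMem_support] at h
    simpa [h] using hC

end DisjointSupports

lemma exists_perturbation_escape {f : ℝ → ℝ} (hf : Continuous f) {γ : ℝ} (hγ : 0 < γ) :
    ∃ P : ℝ → ℝ, Continuous P ∧ (∀ x, |P x| ≤ 2 * γ) ∧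
      ∀ t : ℝ, ∃ n : ℕ, γ ≤ |f (t + n) + P (t + n)| := by
  choose N hN using fun i : ℤ => exists_comb_escape (a := 5 * i) hf.continuousOn hγ
  set B : ℤ → ℝ → ℝ := fun i => comb f γ (5 * i) (N i)
  have hsupp (i : ℤ) : support (B i) ⊆ Ioo (0 + i • (5 : ℝ)) (0 + (i + 1) • 5) := by
    intro x hx
    obtain ⟨hlo, hhi⟩ := support_comb_subset hx
    simp only [zsmul_eq_mul, zero_add, mem_Ioo]
    push_cast
    constructor <;> linarith
  have hdisj : Pairwise (Disjoint on fun i => support (B i)) :=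
    (pairwise_disjoint_Ioo_add_zsmul (0 : ℝ) 5).mono fun i j h => h.mono (hsupp i) (hsupp j)
  have hlf : LocallyFinite fun i => support (B i) := by
    refine (locallyFinite_Ioo_of_tendsto ?_ ?_).subset hsupp
    · simpa [zsmul_eq_mul] using
        tendsto_intCast_atTop_atTop.atTop_mul_const (by norm_num : (0 : ℝ) < 5)
    · simpa [zsmul_eq_mul, add_mul] using tendsto_atBot_add_const_right _ 5
        ((tendsto_intCast_atBot_iff.2 tendsto_id).atBot_mul_const (by norm_num : (0 : ℝ) < 5))
  refine ⟨fun x => ∑ᶠ i, B i x, continuous_finsum (fun i => continuous_comb) hlf,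
    abs_finsum_apply_le hdisj (by positivity) fun i => abs_comb_le hγ.le, fun t => ?_⟩
  obtain ⟨i, hi⟩ := exists_int_ge (t / 5)
  obtain ⟨m, hm, hesc⟩ := hN i (Int.fract t) ⟨Int.fract_nonneg t, Int.fract_lt_one t⟩
  obtain ⟨n, hn⟩ := Int.eq_ofNat_of_zero_le (a := 5 * i + m - ⌊t⌋) (by
    have : (⌊t⌋ : ℝ) ≤ 5 * i := by linarith [Int.floor_le t]
    have : ⌊t⌋ ≤ 5 * i := by exact_mod_cast this
    omega)
  have ht : t + n = 5 * i + m + Int.fract t := by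
    have := congrArg (fun z : ℤ => (z : ℝ)) hn
    push_cast at this
    rw [← this, ← Int.self_sub_fract t]; ring
  refine ⟨n, ?_⟩
  simp only [ht, finsum_apply_eq_of_mem_support hdisj hm]
  exact hesc

lemma dinf_le_of_forall_abs_sub_le {f g : ℝ → ℝ} {C : ℝ} (hC : 0 ≤ C)
    (h : ∀ x, |f x - g x| ≤ C) : dinf f g ≤ C :=
  ENNReal.toReal_le_of_le_ofReal hC
    ((min_le_left _ _).trans (iSup_le fun x => ENNReal.ofReal_le_ofReal (h x)))

lemma abs_sub_lt_of_dinf_lt {f g : ℝ → ℝ} {δ : ℝ} (hδ : δ ≤ 1) (h : dinf f g < δ) (x : ℝ) :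
    |f x - g x| < δ := by
  by_contra! hx
  have hle : ENNReal.ofReal δ ≤ min (⨆ y, ENNReal.ofReal |f y - g y|) 1 :=
    le_min ((ENNReal.ofReal_le_ofReal hx).trans (le_iSup (fun y => ENNReal.ofReal |f y - g y|) x))
      (ENNReal.ofReal_le_one.2 hδ)
  have hδ0 : 0 ≤ δ := ENNReal.toReal_nonneg.trans h.le
  have := ENNReal.toReal_mono (ne_top_of_le_ne_top ENNReal.one_ne_top (min_le_right _ _)) hle
  rw [ENNReal.toReal_ofReal hδ0] at this
  exact (h.trans_le this).false

theorem stmt9_general (X : Set (ℕ → ℝ))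
    (h0 : (fun _ => (0 : ℝ)) ∈ X) :
    ∀ f : ℝ → ℝ, Continuous f → ∀ ε > (0 : ℝ),
      ∃ g : ℝ → ℝ, Continuous g ∧ dinf f g < ε ∧
        ∃ δ > (0 : ℝ), ∀ h : ℝ → ℝ, Continuous h → dinf g h < δ → ¬ memU X h := by
  intro f hf ε hε
  obtain ⟨γ, hγ, hγε, hγ1⟩ : ∃ γ : ℝ, 0 < γ ∧ 2 * γ < ε ∧ γ ≤ 1 :=
    ⟨min ε 1 / 4, by positivity, by linarith [min_le_left ε 1, lt_min hε one_pos],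
      by linarith [min_le_right ε 1]⟩
  obtain ⟨P, hPc, hPb, hPesc⟩ := exists_perturbation_escape hf hγ
  refine ⟨f + P, hf.add hPc, ?_, γ, hγ, ?_⟩
  · calc dinf f (f + P) ≤ 2 * γ :=
          dinf_le_of_forall_abs_sub_le (by positivity) fun x => by simpa using hPb x
      _ < ε := hγε
  · rintro h - hgh ⟨-, hU⟩
    obtain ⟨t, ht⟩ := hU _ h0
    obtain ⟨n, hn⟩ := hPesc t
    have := abs_sub_lt_of_dinf_lt hγ1 hgh (t + n)
    rw [ht n, sub_zero] at this
    exact (hn.trans_lt this).false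

/-- U(X) is nowhere dense in (C(ℝ), d_∞). -/
theorem stmt9 (X : Set (ℕ → ℝ)) (hX : ∀ x ∈ X, Bdd x)
    (h0 : (fun _ => (0 : ℝ)) ∈ X)
    (hspan : ∀ c : ℝ, ∀ x ∈ X, (fun n => c + x n) ∈ X) :
    ∀ f : ℝ → ℝ, Continuous f → ∀ ε > (0 : ℝ),
      ∃ g : ℝ → ℝ, Continuous g ∧ dinf f g < ε ∧
        ∃ δ > (0 : ℝ), ∀ h : ℝ → ℝ, Continuous h → dinf g h < δ → ¬ memU X h :=
  stmt9_general X h0
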